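/- arXiv:math/0702869 — 2 statements merged into one kernel-verified Lean document; each statement's English description precedes it below -/
import Mathlib

section
/- Let g be a compact simple Lie algebra of type A_n, t a maximal abelian subalgebra, Π = {α_1,…,α_n} the fundamental roots of Δ(g_C,t_C), and K_j ∈ t_C defined by α_i(K_j) = δ_{ij}. Then for every i with 1 ≤ i ≤ n, the inner automorphism τ_{K_i} = Ad(exp π√−1K_i) is conjugate within the group Int(g) of inner automorphisms to τ_{K_{n+1−i}}. -/
/-!
Common framework: we model the complexification `gC` of a compact Lie algebra `g` as a
complex Lie algebra, the compact real form `g` and the maximal abelian subalgebra `t`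
as real Lie subalgebras of `gC`, roots of `(gC, tC)` as complex-linear functionals on
`gC` (only their restriction to `tC`, the complex span of `t`, matters), and the
inner automorphisms `Ad(exp X) = exp (ad X)` through an abstract family `expAd`
characterized by its action on eigenvectors of `ad X` (which determines it on the
compact form, where every `ad X` is semisimple).
-/

open Complex

namespace Paper

variable (gC : Type) [LieRing gC] [LieAlgebra ℂ gC] [LieAlgebra ℝ gC]
  [IsScalarTower ℝ ℂ gC] [FiniteDimensional ℂ gC]

/-- Composition group structure on the Lie algebra automorphisms of `gC`. -/
noncomputable instance : Group (gC ≃ₗ⁅ℂ⁆ gC) where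
  mul f g := g.trans f
  one := LieEquiv.refl
  inv f := f.symm
  mul_assoc f g h := rfl
  one_mul f := rfl
  mul_one f := rfl
  inv_mul_cancel f := by
    ext x
    exact f.symm_apply_apply x

/-- The complex span `t_ℂ` of a real subalgebra `t` of `gC`. -/
def cspan (t : LieSubalgebra ℝ gC) : Submodule ℂ gC := Submodule.span ℂ (t : Set gC)

/-- The root space of the functional `a` with respect to `t_ℂ`. -/
def rootSpace (t : LieSubalgebra ℝ gC) (a : Module.Dual ℂ gC) : Set gC :=
  {X : gC | ∀ H ∈ cspan gC t, ⁅H, X⁆ = a H • X}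

/-- `a` is a root of `(gC, t_ℂ)`. -/
def IsRoot (t : LieSubalgebra ℝ gC) (a : Module.Dual ℂ gC) : Prop :=
  (∃ H ∈ cspan gC t, a H ≠ 0) ∧ ∃ X : gC, X ≠ 0 ∧ X ∈ rootSpace gC t a

/-- `g` is a compact real form of `gC`: `gC = g ⊕ √-1 g` and the Killing form of `g`
is negative definite. -/
structure IsCompactForm (g : LieSubalgebra ℝ gC) : Prop where
  spans : ∀ z : gC, ∃ x ∈ g, ∃ y ∈ g, z = x + Complex.I • y
  inj : ∀ x : gC, x ∈ g → Complex.I • x ∈ g → x = 0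
  negdef : ∀ x : ↥g, x ≠ 0 → killingForm ℝ ↥g x x < 0

/-- `t` is a maximal abelian subalgebra of `g`. -/
structure IsMaxAbelian (g t : LieSubalgebra ℝ gC) : Prop where
  le : t ≤ g
  abelian : ∀ x ∈ t, ∀ y ∈ t, ⁅x, y⁆ = (0 : gC)
  max : ∀ t' : LieSubalgebra ℝ gC, t' ≤ g →
    (∀ x ∈ t', ∀ y ∈ t', ⁅x, y⁆ = (0 : gC)) → t ≤ t' → t' = t

/-- `α 1, …, α n` is a system of fundamental (simple) roots of `Δ(gC, t_ℂ)` and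
`K 1, …, K n` is the dual basis of `t_ℂ`, i.e. `α i (K j) = δ_{ij}`. -/
structure IsSimpleSystem (t : LieSubalgebra ℝ gC) (n : ℕ) (α : ℕ → Module.Dual ℂ gC)
    (K : ℕ → gC) : Prop where
  isRoot : ∀ i ∈ Finset.Icc 1 n, IsRoot gC t (α i)
  decomp : ∀ b : Module.Dual ℂ gC, IsRoot gC t b →
    (∃ k : ℕ → ℕ, ∀ H ∈ cspan gC t, b H = ∑ j ∈ Finset.Icc 1 n, (k j : ℂ) * α j H) ∨
    (∃ k : ℕ → ℕ, ∀ H ∈ cspan gC t, b H = -∑ j ∈ Finset.Icc 1 n, (k j : ℂ) * α j H)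
  K_mem : ∀ j ∈ Finset.Icc 1 n, K j ∈ cspan gC t
  K_dual : ∀ i ∈ Finset.Icc 1 n, ∀ j ∈ Finset.Icc 1 n, α i (K j) = if i = j then 1 else 0

/-- `δ = Σ m_j α_j` is the highest root of `Δ(gC, t_ℂ)`. -/
structure IsHighestRoot (t : LieSubalgebra ℝ gC) (n : ℕ) (α : ℕ → Module.Dual ℂ gC)
    (δ : Module.Dual ℂ gC) (m : ℕ → ℕ) : Prop where
  isRoot : IsRoot gC t δ
  decomp : ∀ H ∈ cspan gC t, δ H = ∑ j ∈ Finset.Icc 1 n, (m j : ℂ) * α j H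
  highest : ∀ (b : Module.Dual ℂ gC) (k : ℕ → ℕ), IsRoot gC t b →
    (∀ H ∈ cspan gC t, b H = ∑ j ∈ Finset.Icc 1 n, (k j : ℂ) * α j H) →
    ∀ j ∈ Finset.Icc 1 n, k j ≤ m j

/-- `expAd X` is the inner automorphism `Ad(exp X) = exp (ad X)` of `gC`:
it multiplies each eigenvector of `ad X` with eigenvalue `c` by `e^c`, it is additive on
commuting arguments, and conjugation by any automorphism transports it naturally. -/
structure IsExpAd (expAd : gC → (gC ≃ₗ⁅ℂ⁆ gC)) : Prop where
  eig : ∀ (X Y : gC) (c : ℂ), ⁅X, Y⁆ = c • Y → expAd X Y = Complex.exp c • Y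
  add : ∀ X Y : gC, ⁅X, Y⁆ = 0 → expAd (X + Y) = expAd X * expAd Y
  conj : ∀ (f : gC ≃ₗ⁅ℂ⁆ gC) (X : gC), f * expAd X * f⁻¹ = expAd (f X)

/-- The group `Int(s)` of inner automorphisms generated by `exp (ad X)`, `X ∈ s`. -/
noncomputable def Inn (expAd : gC → (gC ≃ₗ⁅ℂ⁆ gC)) (s : LieSubalgebra ℝ gC) :
    Subgroup (gC ≃ₗ⁅ℂ⁆ gC) :=
  Subgroup.closure (expAd '' (s : Set gC))

/-- The automorphism `τ_H = Ad(exp π √-1 H)`. -/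
noncomputable def tau (expAd : gC → (gC ≃ₗ⁅ℂ⁆ gC)) (H : gC) : gC ≃ₗ⁅ℂ⁆ gC :=
  expAd (((Real.pi : ℂ) * Complex.I) • H)

/-- The automorphism `Ad(exp (π/2) √-1 H)`. -/
noncomputable def sigmaAd (expAd : gC → (gC ≃ₗ⁅ℂ⁆ gC)) (H : gC) : gC ≃ₗ⁅ℂ⁆ gC :=
  expAd ((((Real.pi / 2 : ℝ) : ℂ) * Complex.I) • H)

/-- The fixed point set `g^f` of an automorphism `f` inside the real form `g`. -/
def FixIn (g : LieSubalgebra ℝ gC) (f : gC ≃ₗ⁅ℂ⁆ gC) : Set gC :=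
  {x : gC | x ∈ g ∧ f x = x}

/-- Root space decomposition: `gC` is spanned by `t_ℂ` together with the root spaces. -/
def SpansByRoots (t : LieSubalgebra ℝ gC) : Prop :=
  Submodule.span ℂ ((cspan gC t : Set gC) ∪
    {X : gC | ∃ a : Module.Dual ℂ gC, IsRoot gC t a ∧ X ∈ rootSpace gC t a}) = ⊤

end Paper

/-!
For each simple root `α_q`, `Int(g)` contains an element acting on `t_ℂ` as the
reflection `s_q`. If `x + √-1 y` (`x, y ∈ g`) is a root vector, then `⁅y, x⁆ ∈ t` by
maximality, and `ad y` preserves the plane spanned by `√-1 ⁅y, x⁆` and `x`, acting there with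
eigenvalues `±√-1 μ`, where `μ > 0` because the Killing form is negative definite. Hence
`exp (ad (π/μ) y)` is `-1` on that plane and fixes `ker α_q ∩ t_ℂ`.

For type `A_n` the highest root and the Dynkin diagram force the Cartan integers
`α_p(h_q) ∈ {2, -1, 0}`. Coordinatize `H ∈ t_ℂ` by `(α_p(H))_p`. As for
`α_p = e_p - e_{p+1}` on `ℂ^{n+1}`, `K_i` corresponds to the subset `{1, …, i}` of
`{1, …, n + 1}` and `-K_{n+1-i}` to `{n + 2 - i, …, n + 1}`, and `s_q` acts as the
transposition of `q` and `q + 1`. Sorting both subsets gives `ν ∈ Int(g)` with `ν K_i = -K_{n+1-i}`, so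
`ν τ_{K_i} ν⁻¹ = τ_{-K_{n+1-i}} = τ_{K_{n+1-i}}`; the last step holds because roots take
integer values on `K_j`, so `τ_{K_j}² = 1`.
-/

namespace Paper

open Finset

lemma eq_zero_of_lie_eq_of_killingForm_neg {L : Type*} [LieRing L] [LieAlgebra ℝ L]
    (hneg : ∀ x : L, x ≠ 0 → killingForm ℝ L x x < 0) {h x y : L} {c d : ℝ}
    (hx : ⁅h, x⁆ = c • x - d • y) (hy : ⁅h, y⁆ = d • x + c • y) (hxy : x ≠ 0 ∨ y ≠ 0) :
    c = 0 := by
  have hnonpos : ∀ z : L, killingForm ℝ L z z ≤ 0 := fun z => by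
    rcases eq_or_ne z 0 with rfl | hz
    · simp
    · exact (hneg z hz).le
  have hinv : ∀ z : L, killingForm ℝ L ⁅h, z⁆ z = 0 := fun z => by
    rw [LieModule.traceForm_apply_lie_apply, lie_self, map_zero]
  have hsum : c * (killingForm ℝ L x x + killingForm ℝ L y y) = 0 := by
    have h₁ := hinv x
    have h₂ := hinv y
    rw [hx] at h₁
    rw [hy] at h₂
    simp only [map_sub, map_add, map_smul, LinearMap.sub_apply, LinearMap.add_apply,
      LinearMap.smul_apply, smul_eq_mul] at h₁ h₂
    linear_combination h₁ + h₂ - d * LieModule.traceForm_comm ℝ L L x y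
  have hlt : killingForm ℝ L x x + killingForm ℝ L y y < 0 := by
    rcases hxy with h0 | h0
    · linarith [hneg x h0, hnonpos y]
    · linarith [hneg y h0, hnonpos x]
  exact (mul_eq_zero.mp hsum).resolve_right hlt.ne

section RealForm

variable {gC : Type} [LieRing gC] [LieAlgebra ℝ gC] {g t : LieSubalgebra ℝ gC}

lemma IsMaxAbelian.mem_of_forall_lie_eq_zero (ht : IsMaxAbelian gC g t) {v : gC} (hv : v ∈ g)
    (hvt : ∀ h ∈ t, ⁅h, v⁆ = 0) : v ∈ t := by
  have hsup : ∀ z ∈ t.toSubmodule ⊔ Submodule.span ℝ {v}, ∃ z₁ ∈ t, ∃ c : ℝ,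
      z = z₁ + c • v := by
    intro z hz
    obtain ⟨z₁, hz₁, z₂, hz₂, rfl⟩ := Submodule.mem_sup.mp hz
    obtain ⟨c, rfl⟩ := Submodule.mem_span_singleton.mp hz₂
    exact ⟨z₁, hz₁, c, rfl⟩
  have habel : ∀ z ∈ t.toSubmodule ⊔ Submodule.span ℝ {v},
      ∀ w ∈ t.toSubmodule ⊔ Submodule.span ℝ {v}, ⁅z, w⁆ = 0 := by
    intro z hz w hw
    obtain ⟨z₁, hz₁, c, rfl⟩ := hsup z hz
    obtain ⟨w₁, hw₁, d, rfl⟩ := hsup w hw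
    have hvw : ⁅v, w₁⁆ = 0 := by rw [← lie_skew, hvt w₁ hw₁, neg_zero]
    simp [ht.abelian z₁ hz₁ w₁ hw₁, hvt z₁ hz₁, hvw]
  let t' : LieSubalgebra ℝ gC :=
    { toSubmodule := t.toSubmodule ⊔ Submodule.span ℝ {v}
      lie_mem' := fun hz hw => by rw [habel _ hz _ hw]; exact Submodule.zero_mem _ }
  have hle : t' ≤ g := fun z hz => by
    obtain ⟨z₁, hz₁, c, rfl⟩ := hsup z hz
    exact add_mem (ht.le hz₁) (g.smul_mem c hv)
  have heq : t' = t := ht.max t' hle habel (fun z hz => Submodule.mem_sup_left hz)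
  exact heq ▸ Submodule.mem_sup_right (Submodule.mem_span_singleton_self v)

variable [LieAlgebra ℂ gC]

lemma mem_rootSpace_of_forall_mem {a : Module.Dual ℂ gC} {Y : gC}
    (h : ∀ x ∈ t, ⁅x, Y⁆ = a x • Y) : Y ∈ rootSpace gC t a := by
  intro H hH
  induction hH using Submodule.span_induction with
  | mem x hx => exact h x hx
  | zero => rw [zero_lie, map_zero, zero_smul]
  | add u w _ _ hu hw => rw [add_lie, hu, hw, map_add, add_smul]
  | smul c u _ hu => rw [smul_lie, hu, map_smul, smul_eq_mul, mul_smul]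

lemma exists_mem_apply_ne_zero {a : Module.Dual ℂ gC} (ha : ∃ H ∈ cspan gC t, a H ≠ 0) :
    ∃ h ∈ t, a h ≠ 0 := by
  by_contra! h
  obtain ⟨H, hH, hne⟩ := ha
  exact hne (Submodule.span_le.mpr (fun x hx => LinearMap.mem_ker.mpr (h x hx)) hH)

lemma IsCompactForm.eq_of_add_I_smul_eq (hg : IsCompactForm gC g) {x y x' y' : gC}
    (hx : x ∈ g) (hy : y ∈ g) (hx' : x' ∈ g) (hy' : y' ∈ g)
    (h : x + I • y = x' + I • y') : x = x' ∧ y = y' := by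
  have hyy : I • (y - y') = -(x - x') :=
    calc I • (y - y') = (x + I • y) - x - I • y' := by rw [smul_sub]; abel
      _ = -(x - x') := by rw [h]; abel
  have hy0 : y - y' = 0 :=
    hg.inj _ (sub_mem hy hy') (hyy ▸ neg_mem (sub_mem hx hx'))
  rw [hy0, smul_zero, zero_eq_neg] at hyy
  exact ⟨sub_eq_zero.mp hyy, sub_eq_zero.mp hy0⟩

lemma mem_cspan {x : gC} (hx : x ∈ t) : x ∈ cspan gC t :=
  Submodule.subset_span hx

lemma IsMaxAbelian.lie_eq_zero (ht : IsMaxAbelian gC g t) {H H' : gC}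
    (hH : H ∈ cspan gC t) (hH' : H' ∈ cspan gC t) : ⁅H, H'⁆ = 0 := by
  induction hH using Submodule.span_induction with
  | mem x hx =>
    induction hH' using Submodule.span_induction with
    | mem y hy => exact ht.abelian x hx y hy
    | zero => exact lie_zero x
    | add _ _ _ _ h₁ h₂ => rw [lie_add, h₁, h₂, add_zero]
    | smul c _ _ h => rw [lie_smul, h, smul_zero]
  | zero => exact zero_lie H'
  | add _ _ _ _ h₁ h₂ => rw [add_lie, h₁, h₂, add_zero]
  | smul c _ _ h => rw [smul_lie, h, smul_zero]

structure IsRootReflection (t : LieSubalgebra ℝ gC) (a : Module.Dual ℂ gC) (h : gC)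
    (ν : gC ≃ₗ⁅ℂ⁆ gC) : Prop where
  coroot_mem : h ∈ cspan gC t
  apply_coroot : a h = 2
  apply_eq : ∀ H ∈ cspan gC t, ν H = H - a H • h

lemma isRootReflection_of_apply_eq_neg {a : Module.Dual ℂ gC} {H₀ : gC}
    {ν : gC ≃ₗ⁅ℂ⁆ gC} (hH₀ : H₀ ∈ cspan gC t) (ha : a H₀ ≠ 0) (hν : ν H₀ = -H₀)
    (hfix : ∀ H ∈ cspan gC t, a H = 0 → ν H = H) :
    IsRootReflection t a ((2 / a H₀) • H₀) ν where
  coroot_mem := Submodule.smul_mem _ _ hH₀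
  apply_coroot := by rw [map_smul, smul_eq_mul, div_mul_cancel₀ _ ha]
  apply_eq H hH := by
    set c := a H / a H₀
    have hker : a (H - c • H₀) = 0 := by
      rw [map_sub, map_smul, smul_eq_mul, div_mul_cancel₀ _ ha, sub_self]
    calc ν H = ν (H - c • H₀) + c • ν H₀ := by
          rw [← map_smul, ← map_add, sub_add_cancel]
      _ = H - a H • ((2 / a H₀) • H₀) := by
        rw [hfix _ (sub_mem hH (Submodule.smul_mem _ _ hH₀)) hker, hν]
        match_scalars
        · rfl
        · simp only [c]; ring

variable [IsScalarTower ℝ ℂ gC]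

lemma ofReal_smul_eq (r : ℝ) (x : gC) : (r : ℂ) • x = r • x := by
  rw [← algebraMap_smul ℂ r x]; rfl

lemma smul_add_I_smul (c : ℂ) (u w : gC) :
    c • (u + I • w) = (c.re • u - c.im • w) + I • (c.im • u + c.re • w) := by
  rw [← ofReal_smul_eq c.re u, ← ofReal_smul_eq c.im w, ← ofReal_smul_eq c.im u,
    ← ofReal_smul_eq c.re w]
  conv_lhs => rw [← Complex.re_add_im c]
  match_scalars <;> simp [Complex.ext_iff]

lemma IsCompactForm.lie_re_im_of_mem_rootSpace (hg : IsCompactForm gC g) (ht : IsMaxAbelian gC g t)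
    {a : Module.Dual ℂ gC} {x y : gC} (hx : x ∈ g) (hy : y ∈ g)
    (hX : x + I • y ∈ rootSpace gC t a) (hX0 : x + I • y ≠ 0) {h : gC} (hh : h ∈ t) :
    (a h).re = 0 ∧ ⁅h, x⁆ = -(a h).im • y ∧ ⁅h, y⁆ = (a h).im • x := by
  have hhg : h ∈ g := ht.le hh
  have expand : ⁅h, x⁆ + I • ⁅h, y⁆ =
      ((a h).re • x - (a h).im • y) + I • ((a h).im • x + (a h).re • y) := by
    rw [← lie_smul, ← lie_add, hX h (mem_cspan hh), smul_add_I_smul]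
  obtain ⟨hx', hy'⟩ := hg.eq_of_add_I_smul_eq (g.lie_mem hhg hx) (g.lie_mem hhg hy)
    (sub_mem (g.smul_mem _ hx) (g.smul_mem _ hy)) (add_mem (g.smul_mem _ hx) (g.smul_mem _ hy))
    expand
  have hre : (a h).re = 0 := by
    refine eq_zero_of_lie_eq_of_killingForm_neg hg.negdef (h := ⟨h, hhg⟩) (x := ⟨x, hx⟩)
      (y := ⟨y, hy⟩) (Subtype.ext hx') (Subtype.ext hy') ?_
    by_contra! hxy
    obtain ⟨rfl, rfl⟩ : x = 0 ∧ y = 0 := by simpa [Subtype.ext_iff] using hxy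
    simp at hX0
  refine ⟨hre, ?_, ?_⟩
  · rw [hx', hre, zero_smul, zero_sub, neg_smul]
  · rw [hy', hre, zero_smul, add_zero]

lemma IsCompactForm.sub_I_smul_mem_rootSpace_neg (hg : IsCompactForm gC g)
    (ht : IsMaxAbelian gC g t) {a : Module.Dual ℂ gC} {x y : gC} (hx : x ∈ g) (hy : y ∈ g)
    (hX : x + I • y ∈ rootSpace gC t a) (hX0 : x + I • y ≠ 0) :
    x - I • y ∈ rootSpace gC t (-a) := by
  refine mem_rootSpace_of_forall_mem fun h hh => ?_
  obtain ⟨hre, hhx, hhy⟩ := hg.lie_re_im_of_mem_rootSpace ht hx hy hX hX0 hh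
  have hah : a h = (a h).im * I := Complex.ext (by simpa using hre) (by simp)
  rw [lie_sub, lie_smul, hhx, hhy, LinearMap.neg_apply, hah, ← ofReal_smul_eq, ← ofReal_smul_eq]
  match_scalars <;> ring_nf <;> simp

lemma IsCompactForm.lie_eq_zero_of_apply_eq_zero (hg : IsCompactForm gC g)
    (ht : IsMaxAbelian gC g t) {a : Module.Dual ℂ gC} {x y : gC} (hx : x ∈ g) (hy : y ∈ g)
    (hX : x + I • y ∈ rootSpace gC t a) (hX0 : x + I • y ≠ 0) {H : gC}
    (hH : H ∈ cspan gC t) (haH : a H = 0) : ⁅H, y⁆ = 0 := by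
  have hX₁ : ⁅H, x + I • y⁆ = 0 := by rw [hX H hH, haH, zero_smul]
  have hX₂ : ⁅H, x - I • y⁆ = 0 := by
    rw [hg.sub_I_smul_mem_rootSpace_neg ht hx hy hX hX0 H hH, LinearMap.neg_apply, haH,
      neg_zero, zero_smul]
  have h2 : ((2 : ℂ) * I) • ⁅H, y⁆ = 0 := by
    rw [← lie_smul, show ((2 : ℂ) * I) • y = (x + I • y) - (x - I • y) by module, lie_sub,
      hX₁, hX₂, sub_zero]
  exact (smul_eq_zero.mp h2).resolve_left (by simp)

/-- `ad U` has the eigenvectors `H₀ ∓ √s • W`, with eigenvalues `±√-1 √s`. -/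
lemma IsExpAd.apply_eq_neg_of_lie_eq {expAd : gC → (gC ≃ₗ⁅ℂ⁆ gC)}
    (hexp : IsExpAd gC expAd)    {U W H₀ : gC} {s : ℝ} (hs : 0 < s)
    (hUH : ⁅U, H₀⁆ = (-(s * I)) • W) (hUW : ⁅U, W⁆ = (-I) • H₀) :
    expAd ((Real.pi / √s) • U) H₀ = -H₀ := by
  set μ : ℝ := √s
  have hμ : (μ : ℂ) ≠ 0 := ofReal_ne_zero.mpr (Real.sqrt_ne_zero'.mpr hs)
  have hμsq : (μ : ℂ) ^ 2 = s := by rw [← ofReal_pow, Real.sq_sqrt hs.le]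
  have heig : ∀ ε : ℂ, ε ^ 2 = 1 → ⁅(Real.pi / μ) • U, H₀ - (ε * μ) • W⁆ =
      (ε * (Real.pi * I)) • (H₀ - (ε * μ) • W) := by
    intro ε hε
    rw [← ofReal_smul_eq, smul_lie, lie_sub, lie_smul, hUH, hUW]
    match_scalars
    · field_simp; linear_combination ε ^ 2 * hμsq + (s : ℂ) * hε
    · field_simp
  have hexp_eig : ∀ ε : ℂ, ε ^ 2 = 1 →
      expAd ((Real.pi / μ) • U) (H₀ - (ε * μ) • W) = -(H₀ - (ε * μ) • W) := by
    intro ε hε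
    have hexp_pi : exp (ε * (Real.pi * I)) = -1 := by
      rcases sq_eq_one_iff.mp hε with rfl | rfl <;> simp [exp_neg, exp_pi_mul_I]
    rw [hexp.eig _ _ _ (heig ε hε), hexp_pi, neg_one_smul]
  have hsplit :
      H₀ = (2 : ℂ)⁻¹ • ((H₀ - ((1 : ℂ) * μ) • W) + (H₀ - ((-1 : ℂ) * μ) • W)) := by
    module
  rw [hsplit, map_smul, map_add, hexp_eig 1 (one_pow 2), hexp_eig (-1) (by norm_num)]
  module

lemma IsCompactForm.lie_mem_and_im_pos (hg : IsCompactForm gC g) (ht : IsMaxAbelian gC g t)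
    {a : Module.Dual ℂ gC} {x y : gC} (hx : x ∈ g) (hy : y ∈ g)
    (hX : x + I • y ∈ rootSpace gC t a) (hX0 : x + I • y ≠ 0)
    (ha : ∃ h ∈ t, a h ≠ 0) : ⁅y, x⁆ ∈ t ∧ 0 < (a ⁅y, x⁆).im := by
  have hrot := fun h (hh : h ∈ t) => hg.lie_re_im_of_mem_rootSpace ht hx hy hX hX0 hh
  have hvt : ⁅y, x⁆ ∈ t := ht.mem_of_forall_lie_eq_zero (g.lie_mem hy hx) fun h hh => by
    rw [leibniz_lie, (hrot h hh).2.2, (hrot h hh).2.1, smul_lie, lie_smul, lie_self, lie_self,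
      smul_zero, smul_zero, add_zero]
  let yg : g := ⟨y, hy⟩
  let xg : g := ⟨x, hx⟩
  have hB : ∀ h (hh : h ∈ t), killingForm ℝ g ⁅yg, xg⁆ ⟨h, ht.le hh⟩
      = (a h).im * killingForm ℝ g yg yg := by
    intro h hh
    have hxh : ⁅xg, ⟨h, ht.le hh⟩⁆ = (a h).im • yg :=
      Subtype.ext (by
        rw [LieSubalgebra.coe_bracket, ← lie_skew, (hrot h hh).2.1, neg_smul, neg_neg]; rfl)
    rw [LieModule.traceForm_apply_lie_apply, hxh, map_smul, smul_eq_mul]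
  obtain ⟨h₁, hh₁, ha₁⟩ := ha
  have him₁ : (a h₁).im ≠ 0 := fun h0 => ha₁ (Complex.ext (hrot h₁ hh₁).1 h0)
  have hy0 : yg ≠ 0 := by
    intro h0
    obtain rfl : y = 0 := congrArg Subtype.val h0
    have hx0 : x = 0 := by
      simpa [him₁] using (hrot h₁ hh₁).2.2.symm
    simp [hx0] at hX0
  have hyy := hg.negdef yg hy0
  have hv0 : ⁅yg, xg⁆ ≠ 0 := by
    intro h0
    have h₁ := hB h₁ hh₁
    rw [h0, map_zero, LinearMap.zero_apply] at h₁
    exact mul_ne_zero him₁ hyy.ne h₁.symm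
  have hvv : killingForm ℝ g ⁅yg, xg⁆ ⟨⁅y, x⁆, ht.le hvt⟩ < 0 := hg.negdef _ hv0
  rw [hB _ hvt] at hvv
  exact ⟨hvt, pos_of_mul_neg_left hvv hyy.le⟩

theorem IsCompactForm.exists_isRootReflection (hg : IsCompactForm gC g) (ht : IsMaxAbelian gC g t)
    {expAd : gC → (gC ≃ₗ⁅ℂ⁆ gC)} (hexp : IsExpAd gC expAd) {a : Module.Dual ℂ gC}
    (ha : IsRoot gC t a) : ∃ h, ∃ ν ∈ Inn gC expAd g, IsRootReflection t a h ν := by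
  obtain ⟨ha₀, X, hX0, hX⟩ := ha
  obtain ⟨x, hx, y, hy, rfl⟩ := hg.spans X
  obtain ⟨hvt, hs⟩ := hg.lie_mem_and_im_pos ht hx hy hX hX0 (exists_mem_apply_ne_zero ha₀)
  have hrot := hg.lie_re_im_of_mem_rootSpace ht hx hy hX hX0 hvt
  have haH₀ : a (I • ⁅y, x⁆) = -(a ⁅y, x⁆).im := by
    rw [map_smul, smul_eq_mul]
    apply Complex.ext <;> simp [hrot.1]
  refine ⟨_, _,
    Subgroup.subset_closure ⟨(Real.pi / √(a ⁅y, x⁆).im) • y, g.smul_mem _ hy, rfl⟩,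
    isRootReflection_of_apply_eq_neg (Submodule.smul_mem _ I (mem_cspan hvt)) ?_ ?_ ?_⟩
  · rw [haH₀]; exact_mod_cast neg_ne_zero.mpr hs.ne'
  · refine hexp.apply_eq_neg_of_lie_eq hs (W := x) ?_ ?_
    · rw [lie_smul, ← lie_skew, hrot.2.2, ← ofReal_smul_eq]
      module
    · rw [smul_smul, neg_mul, I_mul_I, neg_neg, one_smul]
  · intro H hH haH
    rw [hexp.eig _ H 0 ?_, exp_zero, one_smul]
    rw [zero_smul, smul_lie, ← lie_skew y H,
      hg.lie_eq_zero_of_apply_eq_zero ht hx hy hX hX0 hH haH, neg_zero, smul_zero]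

end RealForm

section RootSystem

variable {gC : Type} [LieRing gC] [LieAlgebra ℂ gC] [LieAlgebra ℝ gC]
  {g t : LieSubalgebra ℝ gC}

namespace IsRootReflection

variable {a : Module.Dual ℂ gC} {h : gC} {ν : gC ≃ₗ⁅ℂ⁆ gC}

lemma apply_mem (hν : IsRootReflection t a h ν) {H : gC} (hH : H ∈ cspan gC t) :
    ν H ∈ cspan gC t := by
  rw [hν.apply_eq H hH]
  exact sub_mem hH (Submodule.smul_mem _ _ hν.coroot_mem)

lemma apply_apply (hν : IsRootReflection t a h ν) {H : gC} (hH : H ∈ cspan gC t) :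
    ν (ν H) = H := by
  rw [hν.apply_eq _ (hν.apply_mem hH), hν.apply_eq H hH, map_sub, map_smul, hν.apply_coroot,
    smul_eq_mul]
  module

lemma symm_apply (hν : IsRootReflection t a h ν) {H : gC} (hH : H ∈ cspan gC t) :
    ν.symm H = ν H :=
  ν.symm_apply_eq.mpr (hν.apply_apply hH).symm

lemma sub_smul_apply (hν : IsRootReflection t a h ν) (b : Module.Dual ℂ gC) {H : gC}
    (hH : H ∈ cspan gC t) : (b - b h • a) H = b (ν H) := by
  rw [hν.apply_eq H hH, map_sub, map_smul, LinearMap.sub_apply, LinearMap.smul_apply,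
    smul_eq_mul, smul_eq_mul, mul_comm]

lemma isRoot_sub (hν : IsRootReflection t a h ν) {b : Module.Dual ℂ gC}
    (hb : IsRoot gC t b) : IsRoot gC t (b - b h • a) := by
  obtain ⟨⟨H₁, hH₁, hbH₁⟩, X, hX0, hX⟩ := hb
  refine ⟨⟨ν H₁, hν.apply_mem hH₁, ?_⟩, ν X, ?_, fun H hH => ?_⟩
  · rwa [hν.sub_smul_apply b (hν.apply_mem hH₁), hν.apply_apply hH₁]
  · exact (LinearEquiv.map_ne_zero_iff ν.toLinearEquiv).mpr hX0
  · calc ⁅H, ν X⁆ = ν ⁅ν.symm H, X⁆ := by rw [LieEquiv.map_lie, ν.apply_symm_apply]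
      _ = (b - b h • a) H • ν X := by
        rw [hν.symm_apply hH, hX _ (hν.apply_mem hH), map_smul, hν.sub_smul_apply b hH]

end IsRootReflection

variable {n : ℕ} {α : ℕ → Module.Dual ℂ gC} {K : ℕ → gC}

namespace IsSimpleSystem

lemma sum_apply_K (hsys : IsSimpleSystem gC t n α K) (k : ℕ → ℕ) {p : ℕ}
    (hp : p ∈ Icc 1 n) : ∑ j ∈ Icc 1 n, (k j : ℂ) * α j (K p) = k p := by
  rw [sum_eq_single_of_mem p hp fun j hj hjp => by
      rw [hsys.K_dual j hj p hp, if_neg hjp, mul_zero],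
    hsys.K_dual p hp p hp, if_pos rfl, mul_one]

lemma exists_int_apply_K (hsys : IsSimpleSystem gC t n α K) {b : Module.Dual ℂ gC}
    (hb : IsRoot gC t b) {p : ℕ} (hp : p ∈ Icc 1 n) : ∃ m : ℤ, b (K p) = m := by
  rcases hsys.decomp b hb with ⟨k, hk⟩ | ⟨k, hk⟩
  · exact ⟨k p, by rw [hk _ (hsys.K_mem p hp), hsys.sum_apply_K k hp]; norm_cast⟩
  · exact ⟨-k p, by rw [hk _ (hsys.K_mem p hp), hsys.sum_apply_K k hp]; push_cast; rfl⟩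

lemma exists_nat_coeffs_of_apply_K_eq_one (hsys : IsSimpleSystem gC t n α K)
    {b : Module.Dual ℂ gC} (hb : IsRoot gC t b) {p : ℕ} (hp : p ∈ Icc 1 n)
    (hbp : b (K p) = 1) :
    ∃ k : ℕ → ℕ, ∀ H ∈ cspan gC t, b H = ∑ j ∈ Icc 1 n, (k j : ℂ) * α j H := by
  refine (hsys.decomp b hb).resolve_right fun ⟨k, hk⟩ => ?_
  rw [hk _ (hsys.K_mem p hp), hsys.sum_apply_K k hp] at hbp
  exact Nat.cast_add_one_ne_zero (R := ℂ) (k p) (by linear_combination -hbp)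

lemma not_isRoot_of_apply_K (hsys : IsSimpleSystem gC t n α K) {b : Module.Dual ℂ gC}
    {p q : ℕ} (hp : p ∈ Icc 1 n) (hq : q ∈ Icc 1 n) (hbp : b (K p) = 1) (hbq : b (K q) = -1) :
    ¬IsRoot gC t b := fun hb => by
  obtain ⟨k, hk⟩ := hsys.exists_nat_coeffs_of_apply_K_eq_one hb hp hbp
  rw [hk _ (hsys.K_mem q hq), hsys.sum_apply_K k hq] at hbq
  exact Nat.cast_add_one_ne_zero (R := ℂ) (k q) (by linear_combination hbq)

end IsSimpleSystem

def cartanA (p q : ℕ) : ℂ :=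
  if p = q then 2 else if q = p + 1 ∨ p = q + 1 then -1 else 0

lemma IsRootReflection.apply_coroot_eq_cartanA (hsys : IsSimpleSystem gC t n α K)
    {δ : Module.Dual ℂ gC} {m : ℕ → ℕ} (hδ : IsHighestRoot gC t n α δ m)
    (hAn : ∀ j ∈ Icc 1 n, m j = 1)
    (hadj : ∀ p ∈ Icc 1 n, ∀ q ∈ Icc 1 n, p ≠ q →
      (IsRoot gC t (α p + α q) ↔ (q = p + 1 ∨ p = q + 1)))
    {p q : ℕ} (hp : p ∈ Icc 1 n) (hq : q ∈ Icc 1 n) {h : gC} {ν : gC ≃ₗ⁅ℂ⁆ gC}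
    (hν : IsRootReflection t (α q) h ν) : α p h = cartanA p q := by
  rcases eq_or_ne p q with rfl | hpq
  · rw [cartanA, if_pos rfl, hν.apply_coroot]
  have hK : ∀ b : Module.Dual ℂ gC, ∀ c : ℂ,
      (b - c • α q) (K p) = b (K p) ∧ (b - c • α q) (K q) = b (K q) - c := fun b c => by
    simp [hsys.K_dual _ hq _ hp, hsys.K_dual _ hq _ hq, hpq.symm]
  have hpp : α p (K p) = 1 := by rw [hsys.K_dual _ hp _ hp, if_pos rfl]
  have hpq' : α p (K q) = 0 := by rw [hsys.K_dual _ hp _ hq, if_neg hpq]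
  -- `α p - (α p h) α q` is a positive root, so its `α q`-coefficient `-α p h` is in `[0, m q]`
  have hb := hν.isRoot_sub (hsys.isRoot p hp)
  obtain ⟨k, hk⟩ := hsys.exists_nat_coeffs_of_apply_K_eq_one hb hp (by rw [(hK _ _).1, hpp])
  have hkq : α p h = -(k q) := by
    have := hk _ (hsys.K_mem q hq)
    rw [hsys.sum_apply_K k hq, (hK _ _).2, hpq'] at this
    linear_combination -this
  have hk1 : k q ≤ 1 := hAn q hq ▸ hδ.highest _ k hb hk q hq
  rw [cartanA, if_neg hpq, hkq]
  interval_cases hkq' : k q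
  · rw [if_neg]
    · simp
    intro hadj'
    have hc := hν.isRoot_sub ((hadj p hp q hq hpq).mpr hadj')
    refine hsys.not_isRoot_of_apply_K hp hq ?_ ?_ hc
    · simp [hsys.K_dual _ hq _ hp, hpq.symm, hpp]
    · simp [hsys.K_dual _ hq _ hq, hpq', hν.apply_coroot, hkq]
      norm_num
  · rw [if_pos ((hadj p hp q hq hpq).mp (by convert hb using 1; rw [hkq]; simp))]
    simp

lemma SpansByRoots.linearMap_ext (hspan : SpansByRoots gC t) {f f' : gC →ₗ[ℂ] gC}
    (hcspan : ∀ H ∈ cspan gC t, f H = f' H)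
    (hroot : ∀ a, IsRoot gC t a → ∀ X ∈ rootSpace gC t a, f X = f' X) : f = f' := by
  refine LinearMap.ext_on hspan ?_
  rintro X (hX | ⟨a, ha, hX⟩)
  exacts [hcspan X hX, hroot a ha X hX]

lemma IsSimpleSystem.eq_of_forall_apply_eq [LieAlgebra.IsSimple ℂ gC]
    (hsys : IsSimpleSystem gC t n α K) (ht : IsMaxAbelian gC g t) (hspan : SpansByRoots gC t)
    {H H' : gC}
    (hH : H ∈ cspan gC t) (hH' : H' ∈ cspan gC t) (h : ∀ p ∈ Icc 1 n, α p H = α p H') :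
    H = H' := by
  have hD : H - H' ∈ cspan gC t := sub_mem hH hH'
  have hα : ∀ j ∈ Icc 1 n, α j (H - H') = 0 := fun j hj => by rw [map_sub, h j hj, sub_self]
  have hroot : ∀ b, IsRoot gC t b → b (H - H') = 0 := fun b hb => by
    have hsum : ∀ k : ℕ → ℕ, ∑ j ∈ Icc 1 n, (k j : ℂ) * α j (H - H') = 0 := fun k =>
      sum_eq_zero fun j hj => by rw [hα j hj, mul_zero]
    rcases hsys.decomp b hb with ⟨k, hk⟩ | ⟨k, hk⟩
    · rw [hk _ hD, hsum]
    · rw [hk _ hD, hsum, neg_zero]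
  have had : LieAlgebra.ad ℂ gC (H - H') = 0 := hspan.linearMap_ext
    (fun H'' hH'' => ht.lie_eq_zero hD hH'')
    (fun b hb X hX => by rw [LieAlgebra.ad_apply, hX _ hD, hroot b hb, zero_smul]; rfl)
  have hcenter : H - H' ∈ LieAlgebra.center ℂ gC :=
    (LieModule.mem_maxTrivSubmodule ℂ gC gC _).mpr fun z => by
      rw [← lie_skew, ← LieAlgebra.ad_apply ℂ, had, LinearMap.zero_apply, neg_zero]
  rwa [LieAlgebra.center_eq_bot, LieSubmodule.mem_bot, sub_eq_zero] at hcenter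

lemma IsExpAd.eq_one_of_exp_eq_one {expAd : gC → (gC ≃ₗ⁅ℂ⁆ gC)}
    (hexp : IsExpAd gC expAd) (ht : IsMaxAbelian gC g t) (hspan : SpansByRoots gC t) {X : gC}
    (hX : X ∈ cspan gC t)
    (h : ∀ b, IsRoot gC t b → exp (b X) = 1) : expAd X = 1 := by
  have hlin : ((expAd X : gC ≃ₗ⁅ℂ⁆ gC) : gC →ₗ[ℂ] gC) = LinearMap.id :=
    hspan.linearMap_ext
      (fun H hH => by simp [hexp.eig X H 0 (by rw [zero_smul, ht.lie_eq_zero hX hH])])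
      (fun b hb Y hY => by simp [hexp.eig X Y _ (hY X hX), h b hb])
  ext Y
  exact LinearMap.congr_fun hlin Y

lemma IsExpAd.tau_neg {expAd : gC → (gC ≃ₗ⁅ℂ⁆ gC)} (hexp : IsExpAd gC expAd)
    (ht : IsMaxAbelian gC g t) (hspan : SpansByRoots gC t) {H : gC} (hH : H ∈ cspan gC t)
    (hint : ∀ b, IsRoot gC t b → ∃ m : ℤ, b H = m) :
    tau gC expAd (-H) = tau gC expAd H := by
  have hcomm : ∀ c c' : ℂ, ⁅c • H, c' • H⁆ = 0 := fun c c' => by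
    rw [smul_lie, lie_smul, lie_self, smul_zero, smul_zero]
  have hinv : tau gC expAd (-H) * tau gC expAd H = 1 := by
    rw [tau, tau, ← hexp.add _ _ (by rw [smul_neg, neg_lie, hcomm, neg_zero]), smul_neg,
      neg_add_cancel]
    exact hexp.eq_one_of_exp_eq_one ht hspan (zero_mem _) fun b _ => by simp
  have hsq : tau gC expAd H * tau gC expAd H = 1 := by
    rw [tau, ← hexp.add _ _ (hcomm _ _), ← add_smul]
    refine hexp.eq_one_of_exp_eq_one ht hspan (Submodule.smul_mem _ _ hH) fun b hb => ?_
    obtain ⟨m, hm⟩ := hint b hb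
    rw [map_smul, hm, smul_eq_mul, ← exp_int_mul_two_pi_mul_I m]
    ring_nf
  exact mul_right_cancel (hinv.trans hsq.symm)

end RootSystem

/-- The value `α_p(1_S)` for `α_p = e_p - e_{p+1}` and the indicator vector `1_S` of `S`. -/
def subsetCoord (S : Finset ℕ) (p : ℕ) : ℂ :=
  (if p ∈ S then 1 else 0) - (if p + 1 ∈ S then 1 else 0)

lemma subsetCoord_Icc_one {i p : ℕ} (hp : 1 ≤ p) :
    subsetCoord (Icc 1 i) p = if p = i then 1 else 0 := by
  simp only [subsetCoord, mem_Icc]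
  split_ifs <;> first | omega | norm_num

lemma subsetCoord_Icc_top {n i p : ℕ} (hp : p ≤ n) (hi : i ≤ n) :
    subsetCoord (Icc (n + 2 - i) (n + 1)) p = -(if p = n + 1 - i then 1 else 0) := by
  simp only [subsetCoord, mem_Icc]
  split_ifs <;> first | omega | norm_num

lemma subsetCoord_insert_erase {S : Finset ℕ} {q : ℕ} (hq : q ∉ S) (hq1 : q + 1 ∈ S)
    (p : ℕ) :
    subsetCoord (insert q (S.erase (q + 1))) p = subsetCoord S p + cartanA p q := by
  have hind : ∀ j, (if j ∈ insert q (S.erase (q + 1)) then (1 : ℂ) else 0) =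
      (if j ∈ S then 1 else 0) + (if j = q then 1 else 0) - (if j = q + 1 then 1 else 0) := by
    intro j
    by_cases hjq : j = q
    · simp [hjq, hq]
    by_cases hjq1 : j = q + 1
    · simp [hjq1, hq1]
    simp [hjq, hjq1]
  rw [subsetCoord, subsetCoord, hind, hind, cartanA]
  by_cases h₁ : p = q
  · subst h₁; simp [hq, hq1]; norm_num
  by_cases h₂ : q = p + 1
  · subst h₂; simp [hq, show p ≠ p + 1 + 1 by omega]; ring
  by_cases h₃ : p = q + 1
  · subst h₃; simp [hq1, show q + 1 + 1 ≠ q by omega]; ring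
  simp [h₁, h₂, h₃, Ne.symm h₂]

lemma eq_Icc_one_card_of_pred_mem {S : Finset ℕ} (h0 : 0 ∉ S)
    (hpred : ∀ j ∈ S, 2 ≤ j → j - 1 ∈ S) : S = Icc 1 S.card := by
  rcases S.eq_empty_or_nonempty with rfl | hne
  · rfl
  have hdown : ∀ j ∈ S, ∀ k, 1 ≤ k → k ≤ j → k ∈ S := by
    intro j hj k hk hkj
    induction j, hkj using Nat.le_induction with
    | base => exact hj
    | succ j hkj ih => exact ih (by simpa using hpred (j + 1) hj (by omega))
  have hS : S = Icc 1 (S.max' hne) := by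
    ext j
    rw [mem_Icc]
    refine ⟨fun hj => ⟨Nat.one_le_iff_ne_zero.mpr (ne_of_mem_of_not_mem hj h0),
      le_max' S j hj⟩, fun ⟨h1, h2⟩ => hdown _ (max'_mem S hne) j h1 h2⟩
  conv_rhs => rw [hS, Nat.card_Icc, Nat.add_sub_cancel]
  exact hS

lemma card_insert_erase_succ {S : Finset ℕ} {q : ℕ} (hq : q ∉ S) (hq1 : q + 1 ∈ S) :
    (insert q (S.erase (q + 1))).card = S.card := by
  rw [card_insert_of_notMem fun h => hq (mem_of_mem_erase h), card_erase_add_one hq1]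

lemma sum_insert_erase_succ {S : Finset ℕ} {q : ℕ} (hq : q ∉ S) (hq1 : q + 1 ∈ S) :
    (insert q (S.erase (q + 1))).sum id + 1 = S.sum id := by
  rw [sum_insert fun h => hq (mem_of_mem_erase h), ← sum_erase_add S id hq1, id, id]
  ring

section WeylGroup

variable {gC : Type} [LieRing gC] [LieAlgebra ℂ gC] [LieAlgebra ℝ gC]
  {g t : LieSubalgebra ℝ gC} {n : ℕ} {α : ℕ → Module.Dual ℂ gC}

lemma IsRootReflection.subsetCoord_apply {q : ℕ} {h : gC} {ν : gC ≃ₗ⁅ℂ⁆ gC}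
    (hν : IsRootReflection t (α q) h ν) (hq : q ∈ Icc 1 n)
    (hcartan : ∀ p ∈ Icc 1 n, α p h = cartanA p q) {S : Finset ℕ} (hqS : q ∉ S)
    (hq1S : q + 1 ∈ S) {H : gC} (hH : H ∈ cspan gC t)
    (hHS : ∀ p ∈ Icc 1 n, α p H = subsetCoord S p) :
    ∀ p ∈ Icc 1 n, α p (ν H) = subsetCoord (insert q (S.erase (q + 1))) p := by
  intro p hp
  have hSq : subsetCoord S q = -1 := by simp [subsetCoord, hqS, hq1S]
  rw [hν.apply_eq H hH, map_sub, map_smul, smul_eq_mul, hHS p hp, hHS q hq, hSq, hcartan p hp,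
    subsetCoord_insert_erase hqS hq1S]
  ring

lemma exists_mem_Inn_subsetCoord_Icc_card {expAd : gC → (gC ≃ₗ⁅ℂ⁆ gC)}
    (hrefl : ∀ q ∈ Icc 1 n, ∃ h, ∃ ν ∈ Inn gC expAd g,
      IsRootReflection t (α q) h ν ∧ ∀ p ∈ Icc 1 n, α p h = cartanA p q)
    {S : Finset ℕ} (hS : S ⊆ Icc 1 (n + 1)) {H : gC} (hH : H ∈ cspan gC t)
    (hHS : ∀ p ∈ Icc 1 n, α p H = subsetCoord S p) :
    ∃ ν ∈ Inn gC expAd g, ν H ∈ cspan gC t ∧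
      ∀ p ∈ Icc 1 n, α p (ν H) = subsetCoord (Icc 1 S.card) p := by
  induction hN : S.sum id using Nat.strong_induction_on generalizing S H with
  | _ N ih =>
  by_cases hpred : ∀ j ∈ S, 2 ≤ j → j - 1 ∈ S
  · refine ⟨1, one_mem _, hH, ?_⟩
    rwa [← eq_Icc_one_card_of_pred_mem (fun h0 => by simpa using hS h0) hpred]
  -- otherwise move some `j ∈ S` with `j - 1 ∉ S` one step down; this decreases `∑ S`
  push Not at hpred
  obtain ⟨j, hj, hj2, hj1⟩ := hpred
  obtain ⟨q, rfl⟩ : ∃ q, j = q + 1 := ⟨j - 1, by omega⟩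
  rw [Nat.add_sub_cancel] at hj1
  have hq : q ∈ Icc 1 n := by
    have := mem_Icc.mp (hS hj)
    rw [mem_Icc]
    omega
  obtain ⟨h, ν, hνInn, hν, hcartan⟩ := hrefl q hq
  have hS' : insert q (S.erase (q + 1)) ⊆ Icc 1 (n + 1) := by
    refine insert_subset (mem_Icc.mpr ?_) ((erase_subset _ _).trans hS)
    have := mem_Icc.mp hq
    omega
  obtain ⟨ν', hν'Inn, hν'H, hν'S⟩ :=
    ih _ (by rw [← hN, ← sum_insert_erase_succ hj1 hj]; omega) hS' (hν.apply_mem hH)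
      (hν.subsetCoord_apply hq hcartan hj1 hj hH hHS) rfl
  refine ⟨ν' * ν, mul_mem hν'Inn hνInn, hν'H, ?_⟩
  rwa [card_insert_erase_succ hj1 hj] at hν'S

end WeylGroup

theorem stmt_1_general
    (gC : Type) [LieRing gC] [LieAlgebra ℂ gC] [LieAlgebra ℝ gC]
    [IsScalarTower ℝ ℂ gC]
    [LieAlgebra.IsSimple ℂ gC]
    (g t : LieSubalgebra ℝ gC)
    (hg : IsCompactForm gC g) (ht : IsMaxAbelian gC g t)
    (expAd : gC → (gC ≃ₗ⁅ℂ⁆ gC)) (hexp : IsExpAd gC expAd)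
    (hspan : SpansByRoots gC t)
    (n : ℕ) (α : ℕ → Module.Dual ℂ gC) (K : ℕ → gC)
    (hsys : IsSimpleSystem gC t n α K)
    (δ : Module.Dual ℂ gC) (m : ℕ → ℕ) (hδ : IsHighestRoot gC t n α δ m)
    -- type `A_n`: all coefficients of the highest root are `1` …
    (hAn : ∀ j ∈ Finset.Icc 1 n, m j = 1)
    -- … and the simple roots are labeled along the Dynkin diagram of type `A_n`
    (hadj : ∀ p ∈ Finset.Icc 1 n, ∀ q ∈ Finset.Icc 1 n, p ≠ q →
      (IsRoot gC t (α p + α q) ↔ (q = p + 1 ∨ p = q + 1)))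
    (i : ℕ) (hi : i ∈ Finset.Icc 1 n) :
    ∃ ν ∈ Inn gC expAd g,
      ν * tau gC expAd (K i) * ν⁻¹ = tau gC expAd (K (n + 1 - i)) := by
  obtain ⟨hi1, hin⟩ := mem_Icc.mp hi
  have hi' : n + 1 - i ∈ Icc 1 n := mem_Icc.mpr ⟨by omega, by omega⟩
  have hrefl : ∀ q ∈ Icc 1 n, ∃ h, ∃ ν ∈ Inn gC expAd g,
      IsRootReflection t (α q) h ν ∧ ∀ p ∈ Icc 1 n, α p h = cartanA p q := fun q hq => by
    obtain ⟨h, ν, hνInn, hν⟩ := hg.exists_isRootReflection ht hexp (hsys.isRoot q hq)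
    exact ⟨h, ν, hνInn, hν, fun p hp => hν.apply_coroot_eq_cartanA hsys hδ hAn hadj hp hq⟩
  obtain ⟨ν₁, hν₁, hν₁K, hν₁S⟩ := exists_mem_Inn_subsetCoord_Icc_card hrefl
    (S := Icc 1 i) (Icc_subset_Icc_right (by omega)) (hsys.K_mem i hi)
    fun p hp => by rw [hsys.K_dual p hp i hi, subsetCoord_Icc_one (mem_Icc.mp hp).1]
  obtain ⟨ν₂, hν₂, hν₂K, hν₂S⟩ := exists_mem_Inn_subsetCoord_Icc_card hrefl
    (S := Icc (n + 2 - i) (n + 1)) (Icc_subset_Icc_left (by omega))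
    (neg_mem (hsys.K_mem _ hi'))
    fun p hp => by
      rw [map_neg, hsys.K_dual p hp _ hi', subsetCoord_Icc_top (mem_Icc.mp hp).2 hin]
  have hcard : (Icc (n + 2 - i) (n + 1)).card = (Icc 1 i).card := by
    simp only [Nat.card_Icc]
    omega
  have hν : (ν₂⁻¹ * ν₁) (K i) = -K (n + 1 - i) := by
    show ν₂.symm (ν₁ (K i)) = _
    refine ν₂.symm_apply_eq.mpr (hsys.eq_of_forall_apply_eq ht hspan hν₁K hν₂K fun p hp => ?_)
    rw [hν₁S p hp, hν₂S p hp, hcard]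
  refine ⟨ν₂⁻¹ * ν₁, mul_mem (inv_mem hν₂) hν₁, ?_⟩
  calc (ν₂⁻¹ * ν₁) * tau gC expAd (K i) * (ν₂⁻¹ * ν₁)⁻¹
      = tau gC expAd (-K (n + 1 - i)) := by rw [tau, hexp.conj, map_smul, hν, tau]
    _ = tau gC expAd (K (n + 1 - i)) :=
      hexp.tau_neg ht hspan (hsys.K_mem _ hi') fun b hb => hsys.exists_int_apply_K hb hi'

/-- Lemma 2.3, case `A_n`.  Let `g` be a compact simple Lie algebra of type
`A_n` (characterized by: all coefficients of the highest root equal `1`, and consecutive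
simple roots — and only those — are adjacent, i.e. have a root as their sum), `t` a maximal
abelian subalgebra, `Π = {α 1, …, α n}` the fundamental roots and `K j ∈ t_ℂ` the dual basis
(`α i (K j) = δ_{ij}`).  Then for every `1 ≤ i ≤ n` the inner automorphism
`τ_{K i} = Ad(exp π √-1 K i)` is conjugate within `Int(g)` to `τ_{K (n+1-i)}`. -/
theorem stmt_1
    (gC : Type) [LieRing gC] [LieAlgebra ℂ gC] [LieAlgebra ℝ gC]
    [IsScalarTower ℝ ℂ gC] [FiniteDimensional ℂ gC]
    [LieAlgebra.IsSimple ℂ gC]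
    (g t : LieSubalgebra ℝ gC)
    (hg : IsCompactForm gC g) (ht : IsMaxAbelian gC g t)
    (expAd : gC → (gC ≃ₗ⁅ℂ⁆ gC)) (hexp : IsExpAd gC expAd)
    (hspan : SpansByRoots gC t)
    (n : ℕ) (α : ℕ → Module.Dual ℂ gC) (K : ℕ → gC)
    (hsys : IsSimpleSystem gC t n α K)
    (δ : Module.Dual ℂ gC) (m : ℕ → ℕ) (hδ : IsHighestRoot gC t n α δ m)
    -- type `A_n`: all coefficients of the highest root are `1` …
    (hAn : ∀ j ∈ Finset.Icc 1 n, m j = 1)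
    -- … and the simple roots are labeled along the Dynkin diagram of type `A_n`
    (hadj : ∀ p ∈ Finset.Icc 1 n, ∀ q ∈ Finset.Icc 1 n, p ≠ q →
      (IsRoot gC t (α p + α q) ↔ (q = p + 1 ∨ p = q + 1)))
    (i : ℕ) (hi : i ∈ Finset.Icc 1 n) :
    ∃ ν ∈ Inn gC expAd g,
      ν * tau gC expAd (K i) * ν⁻¹ = tau gC expAd (K (n + 1 - i)) :=
  stmt_1_general gC g t hg ht expAd hexp hspan n α K hsys δ m hδ hAn hadj i hi

end Paper
end

section
/- Let g be a compact simple Lie algebra, σ = τ_{(1/2)K_i} = Ad(exp(π/2)√−1K_i) with m_i = 3, and h := g^σ. Let Δ_h^+ := {α ∈ Δ^+(g_C,t_C) : A_α, B_α ∈ h}. Then Δ_h^+ = {α = Σ_{j=1}^{n} k_j α_j ∈ Δ^+(g_C,t_C) : k_i = 0}. -/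
/-!
Common framework: we model the complexification `gC` of a compact Lie algebra `g` as a
complex Lie algebra, the compact real form `g` and the maximal abelian subalgebra `t`
as real Lie subalgebras of `gC`, roots of `(gC, tC)` as complex-linear functionals on
`gC` (only their restriction to `tC`, the complex span of `t`, matters), and the
inner automorphisms `Ad(exp X) = exp (ad X)` through an abstract family `expAd`
characterized by its action on eigenvectors of `ad X` (which determines it on the
compact form, where every `ad X` is semisimple).
-/

open Complex

namespace Paper

variable (gC : Type) [LieRing gC] [LieAlgebra ℂ gC] [LieAlgebra ℝ gC]
  [IsScalarTower ℝ ℂ gC] [FiniteDimensional ℂ gC]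

/-!
On the root space of `a = Σ k_j α_j` the automorphism `σ = Ad(exp (π/2) √-1 K_i)` acts by
`e^{(π/2) √-1 k_i} = √-1 ^ k_i`, and on that of `-a` by the inverse. Since `A_a ± √-1 B_a`
are multiples of `E_{±a}`, both `A_a` and `B_a` are fixed exactly when `4 ∣ k_i`; as
`k_i ≤ m_i = 3` for the highest root, this means `k_i = 0`.
-/

theorem _root_.Complex.exp_pi_div_two_mul_I_mul_intCast_eq_one_iff (k : ℤ) :
    cexp (((Real.pi / 2 : ℝ) : ℂ) * I * k) = 1 ↔ 4 ∣ k := by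
  rw [Complex.exp_eq_one_iff]
  constructor
  · rintro ⟨z, hz⟩
    have hk : (k : ℂ) = ((4 * z : ℤ) : ℂ) := by
      push_cast at hz ⊢
      have hpi : (Real.pi : ℂ) * I ≠ 0 :=
        mul_ne_zero (by exact_mod_cast Real.pi_ne_zero) I_ne_zero
      apply mul_left_cancel₀ hpi
      linear_combination 2 * hz
    exact ⟨z, by exact_mod_cast hk⟩
  · rintro ⟨z, rfl⟩
    exact ⟨z, by push_cast; ring⟩

theorem fixed_sub_and_fixed_I_smul_add_iff {W F : Type*} [AddCommGroup W] [Module ℂ W]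
    [FunLike F W W] [LinearMapClass F ℂ W W] (f : F) (x y : W) :
    (f (x - y) = x - y ∧ f (I • (x + y)) = I • (x + y)) ↔ f x = x ∧ f y = y := by
  simp only [map_sub, map_smul, map_add]
  constructor
  · rintro ⟨hsub, hadd⟩
    have hadd : f x + f y = x + y := smul_right_injective W I_ne_zero hadd
    constructor
    · linear_combination (norm := module) (1 / 2 : ℂ) • (hsub + hadd)
    · linear_combination (norm := module) (1 / 2 : ℂ) • (hadd - hsub)
  · rintro ⟨hx, hy⟩
    rw [hx, hy]
    exact ⟨rfl, rfl⟩

section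

variable {V : Type} [LieRing V] [LieAlgebra ℂ V] [LieAlgebra ℝ V] {t : LieSubalgebra ℝ V}

theorem IsSimpleSystem.apply_K_eq_coeff {n : ℕ} {α : ℕ → Module.Dual ℂ V} {K : ℕ → V}
    (hsys : IsSimpleSystem V t n α K) {a : Module.Dual ℂ V} {k : ℕ → ℕ}
    (hk : ∀ H ∈ cspan V t, a H = ∑ j ∈ Finset.Icc 1 n, (k j : ℂ) * α j H)
    {i : ℕ} (hi : i ∈ Finset.Icc 1 n) :
    a (K i) = k i := by
  rw [hk (K i) (hsys.K_mem i hi), Finset.sum_eq_single_of_mem i hi]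
  · simp [hsys.K_dual i hi i hi]
  · intro j hj hji
    rw [hsys.K_dual j hj i hi, if_neg hji, mul_zero]

theorem IsExpAd.apply_of_mem_rootSpace {expAd : V → (V ≃ₗ⁅ℂ⁆ V)}
    (hexp : IsExpAd V expAd) {a : Module.Dual ℂ V} {X H : V} (hX : X ∈ rootSpace V t a) (hH : H ∈ cspan V t) :
    expAd H X = cexp (a H) • X :=
  hexp.eig H X (a H) (hX H hH)

theorem IsExpAd.sigmaAd_apply_of_mem_rootSpace {expAd : V → (V ≃ₗ⁅ℂ⁆ V)}
    (hexp : IsExpAd V expAd) {a : Module.Dual ℂ V} {X H : V} (hX : X ∈ rootSpace V t a)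
    (hH : H ∈ cspan V t) :
    sigmaAd V expAd H X = cexp (((Real.pi / 2 : ℝ) : ℂ) * I * a H) • X := by
  rw [sigmaAd, hexp.apply_of_mem_rootSpace hX (Submodule.smul_mem _ _ hH), map_smul,
    smul_eq_mul]

theorem IsExpAd.sigmaAd_apply_eq_self_iff_of_mem_rootSpace {expAd : V → (V ≃ₗ⁅ℂ⁆ V)}
    (hexp : IsExpAd V expAd) {a : Module.Dual ℂ V} {X H : V} (hX : X ∈ rootSpace V t a)
    (hX0 : X ≠ 0) (hH : H ∈ cspan V t) {k : ℤ} (hk : a H = k) :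
    sigmaAd V expAd H X = X ↔ 4 ∣ k := by
  rw [hexp.sigmaAd_apply_of_mem_rootSpace hX hH, hk,
    (smul_left_injective ℂ hX0).eq_iff' (one_smul ℂ X),
    Complex.exp_pi_div_two_mul_I_mul_intCast_eq_one_iff]

end

theorem stmt_14_general
    (gC : Type) [LieRing gC] [LieAlgebra ℂ gC] [LieAlgebra ℝ gC]
    (g t : LieSubalgebra ℝ gC)
    (expAd : gC → (gC ≃ₗ⁅ℂ⁆ gC)) (hexp : IsExpAd gC expAd)
    (n : ℕ) (α : ℕ → Module.Dual ℂ gC) (K : ℕ → gC)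
    (hsys : IsSimpleSystem gC t n α K)
    (δ : Module.Dual ℂ gC) (m : ℕ → ℕ) (hδ : IsHighestRoot gC t n α δ m)
    (i : ℕ) (hi : i ∈ Finset.Icc 1 n) (hmi : m i = 3)
    -- the positive roots and the Weyl basis
    (Δp : Finset (Module.Dual ℂ gC))
    (hroots : ∀ a ∈ Δp, IsRoot gC t a)
    (E : Module.Dual ℂ gC → gC)
    (hE : ∀ a ∈ Δp, E a ∈ rootSpace gC t a ∧ E a ≠ 0 ∧
      E (-a) ∈ rootSpace gC t (-a) ∧ E (-a) ≠ 0 ∧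
      (E a - E (-a)) ∈ g ∧ Complex.I • (E a + E (-a)) ∈ g) :
    ∀ a ∈ Δp, ∀ k : ℕ → ℕ,
      (∀ H ∈ cspan gC t, a H = ∑ j ∈ Finset.Icc 1 n, (k j : ℂ) * α j H) →
      (((E a - E (-a)) ∈ FixIn gC g (sigmaAd gC expAd (K i)) ∧
        Complex.I • (E a + E (-a)) ∈ FixIn gC g (sigmaAd gC expAd (K i))) ↔ k i = 0) := by
  intro a ha k hk
  obtain ⟨hEa, hEa0, hEma, hEma0, hAg, hBg⟩ := hE a ha
  have hKi := hsys.K_mem i hi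
  have hak : a (K i) = ((k i : ℤ) : ℂ) := by
    rw [Int.cast_natCast, hsys.apply_K_eq_coeff hk hi]
  have hamK : (-a) (K i) = ((-k i : ℤ) : ℂ) := by
    rw [LinearMap.neg_apply, hak, Int.cast_neg]
  have hki : k i ≤ 3 := hmi ▸ hδ.highest a k (hroots a ha) hk i hi
  simp only [FixIn, Set.mem_ofPred_eq, hAg, hBg, true_and]
  rw [fixed_sub_and_fixed_I_smul_add_iff,
    hexp.sigmaAd_apply_eq_self_iff_of_mem_rootSpace hEa hEa0 hKi hak,
    hexp.sigmaAd_apply_eq_self_iff_of_mem_rootSpace hEma hEma0 hKi hamK, Int.dvd_neg, and_self]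
  omega

/-- **Statement 14** (Lemma 6.1).  Let `g` be a compact simple Lie algebra,
`σ = Ad(exp (π/2) √-1 K i)` with `m i = 3`, and `h := g^σ`.  For a positive root `a` with
Weyl basis vectors `E a, E (-a)` put `A_a = E a - E (-a)` and
`B_a = √-1 (E a + E (-a))`.  Then `Δ_h⁺ := {a ∈ Δ⁺ ∣ A_a, B_a ∈ h}` consists exactly of
the positive roots `a = Σ k_j α_j` with `k i = 0`. -/
theorem stmt_14
    (gC : Type) [LieRing gC] [LieAlgebra ℂ gC] [LieAlgebra ℝ gC]
    [IsScalarTower ℝ ℂ gC] [FiniteDimensional ℂ gC]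
    [LieAlgebra.IsSimple ℂ gC]
    (g t : LieSubalgebra ℝ gC)
    (hg : IsCompactForm gC g) (ht : IsMaxAbelian gC g t)
    (expAd : gC → (gC ≃ₗ⁅ℂ⁆ gC)) (hexp : IsExpAd gC expAd)
    (hspan : SpansByRoots gC t)
    (n : ℕ) (α : ℕ → Module.Dual ℂ gC) (K : ℕ → gC)
    (hsys : IsSimpleSystem gC t n α K)
    (δ : Module.Dual ℂ gC) (m : ℕ → ℕ) (hδ : IsHighestRoot gC t n α δ m)
    (i : ℕ) (hi : i ∈ Finset.Icc 1 n) (hmi : m i = 3)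
    -- the positive roots and the Weyl basis
    (Δp : Finset (Module.Dual ℂ gC))
    (hroots : ∀ a ∈ Δp, IsRoot gC t a)
    (hposdec : ∀ a ∈ Δp, ∃ k : ℕ → ℕ,
      ∀ H ∈ cspan gC t, a H = ∑ j ∈ Finset.Icc 1 n, (k j : ℂ) * α j H)
    (E : Module.Dual ℂ gC → gC)
    (hE : ∀ a ∈ Δp, E a ∈ rootSpace gC t a ∧ E a ≠ 0 ∧
      E (-a) ∈ rootSpace gC t (-a) ∧ E (-a) ≠ 0 ∧
      (E a - E (-a)) ∈ g ∧ Complex.I • (E a + E (-a)) ∈ g) :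
    ∀ a ∈ Δp, ∀ k : ℕ → ℕ,
      (∀ H ∈ cspan gC t, a H = ∑ j ∈ Finset.Icc 1 n, (k j : ℂ) * α j H) →
      (((E a - E (-a)) ∈ FixIn gC g (sigmaAd gC expAd (K i)) ∧
        Complex.I • (E a + E (-a)) ∈ FixIn gC g (sigmaAd gC expAd (K i))) ↔ k i = 0) :=
  stmt_14_general gC g t expAd hexp n α K hsys δ m hδ i hi hmi Δp hroots E hE

end Paper
end
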